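/- With W(x) = 2((1 + x₄)² + x₁² + x₂² + x₃²)^{−1} on the closed upper half-space of ℝ⁴, one has lim_{R→∞} (log R)^{−1} ∫_{B⁴₊(0,R)} W(x)² dx = 4π², i.e. the L² mass of the bubble on the half-ball of radius R diverges logarithmically with this precise rate. -/

import Mathlib

/-!
On the half-space `0 < x₄` one has `(1 + x₄)² + x₁² + x₂² + x₃² = 1 + 2x₄ + |x|² ≥ 1 + |x|²`, so
`W²` is bounded by the radial function `4 / (1 + |x|²)²`, and the difference is
`O((1 + |x|²)^(-5/2))`, which is integrable on `ℝ⁴`. By reflection symmetry the radial function has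
half its ball integral on the half-ball, and in polar coordinates (`|S³| = 2π²`) that is
`π² ∫₀ᴿ 4r³/(1 + r²)² dr = 2π² (log (1 + R²) + 1/(1 + R²) - 1) = 4π² log R + O(1)`.
-/

open MeasureTheory Real Set Filter Topology

noncomputable section

/-- The standard bubble `W_{1,0}` for `n = 3`, `γ = 1/2`:
`W(x) = 2((1 + x₄)² + x₁² + x₂² + x₃²)⁻¹`. -/
def Wb (x : Fin 4 → ℝ) : ℝ :=
  2 * ((1 + x 3) ^ 2 + (x 0) ^ 2 + (x 1) ^ 2 + (x 2) ^ 2)⁻¹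

/-- The upper half-ball `B⁴₊(0,R)`. -/
def hBall (R : ℝ) : Set (Fin 4 → ℝ) := {x | (∑ i, (x i) ^ 2) < R ^ 2 ∧ 0 < x 3}

open Module Metric

section HaarIntegrals

variable {E : Type*} [NormedAddCommGroup E] [NormedSpace ℝ E] [FiniteDimensional ℝ E]
  [MeasurableSpace E] [BorelSpace E] (μ : Measure E) [μ.IsAddHaarMeasure]

theorem setIntegral_ball_fun_norm [Nontrivial E] (f : ℝ → ℝ) {R : ℝ} (hR : 0 ≤ R) :
    ∫ x in ball (0 : E) R, f ‖x‖ ∂μ =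
      finrank ℝ E * μ.real (ball 0 1) * ∫ r in 0..R, r ^ (finrank ℝ E - 1) * f r := by
  have hind : (ball (0 : E) R).indicator (fun x => f ‖x‖) = fun x => (Iio R).indicator f ‖x‖ := by
    ext x; simp [indicator]
  rw [← integral_indicator measurableSet_ball, hind, integral_fun_norm_addHaar,
    intervalIntegral.integral_of_le hR, integral_Ioc_eq_integral_Ioo, ← Iio_inter_Ioi,
    ← Measure.restrict_restrict measurableSet_Iio, ← integral_indicator measurableSet_Iio]
  simp only [nsmul_eq_mul, smul_eq_mul, mul_assoc]
  congr 3
  ext r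
  by_cases h : r < R <;> simp [indicator, h]

theorem setIntegral_inter_pos_eq_half {L : E →L[ℝ] ℝ} (hL : L ≠ 0) {s : Set E}
    (hs : MeasurableSet s) (hs_neg : -s = s) {f : E → ℝ} (hf : ∀ x, f (-x) = f x)
    (hfi : IntegrableOn f s μ) :
    ∫ x in s ∩ {x | 0 < L x}, f x ∂μ = (∫ x in s, f x ∂μ) / 2 := by
  have hker : μ (LinearMap.ker (L : E →ₗ[ℝ] ℝ)) = 0 := by
    refine Measure.addHaar_submodule μ _ fun h => hL ?_
    ext x
    simpa using (LinearMap.ker_eq_top.1 h ▸ rfl : (L : E →ₗ[ℝ] ℝ) x = 0)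
  set P := s ∩ {x | 0 < L x}
  set N := s ∩ {x | L x < 0}
  have hP : MeasurableSet P := hs.inter (measurableSet_lt measurable_const L.measurable)
  have hN : MeasurableSet N := hs.inter (measurableSet_lt L.measurable measurable_const)
  have hNP : ∫ x in N, f x ∂μ = ∫ x in P, f x ∂μ := by
    have hpre : Neg.neg ⁻¹' N = P := by
      ext x
      simp only [N, P, mem_preimage, mem_inter_iff, mem_ofPred_eq, map_neg, neg_lt_zero]
      rw [← Set.mem_neg, hs_neg]
    rw [← (Measure.measurePreserving_neg μ).setIntegral_preimage_emb measurableEmbedding_neg,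
      hpre]
    simp only [hf]
  have hsplit : s =ᵐ[μ] (P ∪ N : Set E) := by
    refine ae_eq_set.2 ⟨measure_mono_null (fun x hx => ?_) hker, ?_⟩
    · rcases lt_trichotomy (L x) 0 with h | h | h
      · exact absurd (Or.inr ⟨hx.1, h⟩) hx.2
      · exact h
      · exact absurd (Or.inl ⟨hx.1, h⟩) hx.2
    · rw [sdiff_eq_empty.2 (union_subset inter_subset_left inter_subset_left), measure_empty]
  rw [setIntegral_congr_set hsplit, setIntegral_union ?_ hN (hfi.mono_set inter_subset_left)
    (hfi.mono_set inter_subset_left), hNP]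
  · ring
  · exact Set.disjoint_left.2 fun x hxP hxN => lt_asymm (α := ℝ) hxP.2 hxN.2

end HaarIntegrals

local notation "ℝ⁴" => EuclideanSpace ℝ (Fin 4)

def halfBall (R : ℝ) : Set ℝ⁴ := ball 0 R ∩ {y | 0 < y 3}

theorem measurableSet_halfBall (R : ℝ) : MeasurableSet (halfBall R) :=
  measurableSet_ball.inter (measurableSet_lt measurable_const (by fun_prop))

theorem norm_sq_fin_four (y : ℝ⁴) : ‖y‖ ^ 2 = y 0 ^ 2 + y 1 ^ 2 + y 2 ^ 2 + y 3 ^ 2 := by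
  rw [EuclideanSpace.real_norm_sq_eq, Fin.sum_univ_four]

theorem Wb_ofLp_sq (y : ℝ⁴) : Wb (WithLp.ofLp y) ^ 2 = 4 / (1 + 2 * y 3 + ‖y‖ ^ 2) ^ 2 := by
  rw [Wb, show 1 + 2 * y 3 + ‖y‖ ^ 2 = (1 + y 3) ^ 2 + y 0 ^ 2 + y 1 ^ 2 + y 2 ^ 2 by
    rw [norm_sq_fin_four]; ring, div_eq_mul_inv, mul_pow, inv_pow]
  norm_num

theorem setIntegral_hBall_Wb_sq {R : ℝ} (hR : 0 ≤ R) :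
    ∫ x in hBall R, Wb x ^ 2 = ∫ y in halfBall R, 4 / (1 + 2 * y 3 + ‖y‖ ^ 2) ^ 2 := by
  have hpre : WithLp.ofLp ⁻¹' hBall R = halfBall R := by
    ext y
    simp only [hBall, halfBall, mem_preimage, mem_inter_iff, mem_ball_zero_iff, mem_ofPred_eq,
      ← EuclideanSpace.real_norm_sq_eq, sq_lt_sq₀ (norm_nonneg y) hR]
  rw [← (PiLp.volume_preserving_ofLp (Fin 4)).setIntegral_preimage_emb
    (MeasurableEquiv.toLp 2 (Fin 4 → ℝ)).symm.measurableEmbedding, hpre]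
  simp only [Wb_ofLp_sq]

theorem integral_cube_mul_four_div_sq (R : ℝ) :
    ∫ r in 0..R, r ^ 3 * (4 / (1 + r ^ 2) ^ 2) = 2 * log (1 + R ^ 2) + 2 / (1 + R ^ 2) - 2 := by
  have hderiv (r : ℝ) : HasDerivAt (fun r => 2 * log (1 + r ^ 2) + 2 * (1 + r ^ 2)⁻¹)
      (r ^ 3 * (4 / (1 + r ^ 2) ^ 2)) r := by
    have hpos : 0 < 1 + r ^ 2 := by positivity
    have hbase : HasDerivAt (fun r : ℝ => 1 + r ^ 2) (2 * r) r := by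
      simpa using (hasDerivAt_pow 2 r).const_add 1
    have := ((hbase.log hpos.ne').const_mul 2).add ((hbase.inv hpos.ne').const_mul 2)
    exact this.congr_deriv (by field_simp; ring)
  rw [intervalIntegral.integral_eq_sub_of_hasDerivAt (fun r _ => hderiv r)
    (Continuous.intervalIntegrable (by fun_prop (disch := intro; positivity)) _ _)]
  norm_num [div_eq_mul_inv]

theorem volume_real_ball_fin_four : volume.real (ball (0 : ℝ⁴) 1) = π ^ 2 / 2 := by
  have hGamma : Real.Gamma (4 / 2 + 1) = 2 := by
    rw [show (4 : ℝ) / 2 + 1 = (2 : ℕ) + 1 by norm_num, Real.Gamma_nat_eq_factorial]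
    norm_num
  have hsqrt : √π ^ 4 = π ^ 2 := by
    rw [show 4 = 2 * 2 from rfl, pow_mul, Real.sq_sqrt pi_nonneg]
  rw [measureReal_def, EuclideanSpace.volume_ball, ENNReal.ofReal_one, one_pow, one_mul,
    ENNReal.toReal_ofReal (by positivity), Fintype.card_fin, Nat.cast_ofNat, hGamma, hsqrt]

theorem integrableOn_ball_four_div_sq (R : ℝ) :
    IntegrableOn (fun y : ℝ⁴ => 4 / (1 + ‖y‖ ^ 2) ^ 2) (ball 0 R) :=
  ((Continuous.locallyIntegrable (by fun_prop (disch := intro; positivity))).integrableOn_isCompact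
    (isCompact_closedBall 0 R)).mono_set ball_subset_closedBall

theorem setIntegral_halfBall_radial {R : ℝ} (hR : 0 ≤ R) :
    ∫ y in halfBall R, 4 / (1 + ‖y‖ ^ 2) ^ 2 =
      2 * π ^ 2 * (log (1 + R ^ 2) + 1 / (1 + R ^ 2) - 1) := by
  have hL : EuclideanSpace.proj (3 : Fin 4) ≠ (0 : ℝ⁴ →L[ℝ] ℝ) := fun h => by
    simpa using congrArg (· (EuclideanSpace.single 3 1)) h
  rw [show halfBall R = ball 0 R ∩ {y | 0 < EuclideanSpace.proj (3 : Fin 4) y} from rfl,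
    setIntegral_inter_pos_eq_half volume hL measurableSet_ball (by simp) (by simp)
      (integrableOn_ball_four_div_sq R),
    setIntegral_ball_fun_norm volume (fun r => 4 / (1 + r ^ 2) ^ 2) hR, finrank_euclideanSpace_fin,
    show 4 - 1 = 3 from rfl, integral_cube_mul_four_div_sq, volume_real_ball_fin_four]
  ring

theorem four_div_sq_sub_four_div_sq_le {b t : ℝ} (hb : 0 < b) (ht : 0 ≤ t) (htb : t ^ 2 ≤ b) :
    4 / b ^ 2 - 4 / (b + 2 * t) ^ 2 ≤ 16 * b ^ (-(5 : ℝ) / 2) := by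
  have hbt : 0 < b + 2 * t := by linarith
  calc 4 / b ^ 2 - 4 / (b + 2 * t) ^ 2 = 16 * t * (b + t) / (b ^ 2 * (b + 2 * t) ^ 2) := by
        field_simp; ring
    _ ≤ 16 * t / b ^ 3 := by
        rw [div_le_div_iff₀ (by positivity) (by positivity)]
        have : (b + t) * b ≤ (b + 2 * t) ^ 2 := by nlinarith
        nlinarith [mul_le_mul_of_nonneg_left this (by positivity : 0 ≤ 16 * t * b ^ 2)]
    _ ≤ 16 * √b / b ^ 3 := by
        gcongr
        exact Real.le_sqrt_of_sq_le htb
    _ = 16 * b ^ (-(5 : ℝ) / 2) := by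
        rw [sqrt_eq_rpow, mul_div_assoc, ← rpow_sub_natCast hb.ne']
        norm_num

theorem abs_setIntegral_halfBall_sub_le (R : ℝ) :
    |(∫ y in halfBall R, 4 / (1 + ‖y‖ ^ 2) ^ 2) -
        ∫ y in halfBall R, 4 / (1 + 2 * y 3 + ‖y‖ ^ 2) ^ 2| ≤
      ∫ y : ℝ⁴, 16 * (1 + ‖y‖ ^ 2) ^ (-(5 : ℝ) / 2) := by
  have hle (y : ℝ⁴) (hy : y ∈ halfBall R) :
      4 / (1 + 2 * y 3 + ‖y‖ ^ 2) ^ 2 ≤ 4 / (1 + ‖y‖ ^ 2) ^ 2 := by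
    have : 0 < y 3 := hy.2
    gcongr
    linarith
  have herr (y : ℝ⁴) (hy : y ∈ halfBall R) :
      4 / (1 + ‖y‖ ^ 2) ^ 2 - 4 / (1 + 2 * y 3 + ‖y‖ ^ 2) ^ 2 ≤
        16 * (1 + ‖y‖ ^ 2) ^ (-(5 : ℝ) / 2) := by
    have h3 : y 3 ^ 2 ≤ 1 + ‖y‖ ^ 2 := by
      nlinarith [norm_sq_fin_four y, sq_nonneg (y 0), sq_nonneg (y 1), sq_nonneg (y 2)]
    have := four_div_sq_sub_four_div_sq_le (by positivity) hy.2.le h3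
    rwa [show 1 + ‖y‖ ^ 2 + 2 * y 3 = 1 + 2 * y 3 + ‖y‖ ^ 2 by ring] at this
  have hG : IntegrableOn (fun y : ℝ⁴ => 4 / (1 + ‖y‖ ^ 2) ^ 2) (halfBall R) :=
    (integrableOn_ball_four_div_sq R).mono_set inter_subset_left
  have hW : IntegrableOn (fun y : ℝ⁴ => 4 / (1 + 2 * y 3 + ‖y‖ ^ 2) ^ 2) (halfBall R) := by
    refine hG.mono' (by fun_prop : Measurable _).aestronglyMeasurable
      ((ae_restrict_iff' (measurableSet_halfBall R)).2 ?_)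
    filter_upwards with y hy
    rw [Real.norm_of_nonneg (by positivity)]
    exact hle y hy
  have hH : Integrable fun y : ℝ⁴ => 16 * (1 + ‖y‖ ^ 2) ^ (-(5 : ℝ) / 2) :=
    (integrable_rpow_neg_one_add_norm_sq (by norm_num [finrank_euclideanSpace_fin])).const_mul 16
  rw [← integral_sub hG hW, abs_of_nonneg (setIntegral_nonneg
    (measurableSet_halfBall R) fun y hy => sub_nonneg.2 (hle y hy))]
  calc _ ≤ ∫ y in halfBall R, 16 * (1 + ‖y‖ ^ 2) ^ (-(5 : ℝ) / 2) :=
        setIntegral_mono_on (hG.sub hW) hH.integrableOn (measurableSet_halfBall R) herr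
    _ ≤ _ := setIntegral_le_integral hH (ae_of_all _ fun y => by positivity)

theorem tendsto_inv_log_mul_of_abs_sub_le {g : ℝ → ℝ} {c C : ℝ}
    (h : ∀ᶠ R in atTop, |g R - c * log R| ≤ C) :
    Tendsto (fun R => (log R)⁻¹ * g R) atTop (𝓝 c) := by
  have hsmall : Tendsto (fun R => (log R)⁻¹ * (g R - c * log R)) atTop (𝓝 0) := by
    refine squeeze_zero_norm' ?_ (by simpa using tendsto_log_atTop.inv_tendsto_atTop.mul_const C)
    filter_upwards [h, tendsto_log_atTop.eventually_gt_atTop 0] with R hR hlog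
    rw [norm_mul, norm_inv, Real.norm_of_nonneg hlog.le]
    exact mul_le_mul_of_nonneg_left hR (by positivity)
  have hc : Tendsto (fun R => c + (log R)⁻¹ * (g R - c * log R)) atTop (𝓝 c) := by
    simpa using hsmall.const_add c
  refine hc.congr' ?_
  filter_upwards [tendsto_log_atTop.eventually_gt_atTop 0] with R hlog
  field_simp
  ring

theorem abs_two_mul_pi_sq_log_one_add_sq_sub_le {R : ℝ} (hR : 1 ≤ R) :
    |2 * π ^ 2 * (log (1 + R ^ 2) + 1 / (1 + R ^ 2) - 1) - 4 * π ^ 2 * log R| ≤ 2 * π ^ 2 := by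
  have hR2 : 1 ≤ R ^ 2 := one_le_pow₀ hR
  have hlog2 : 2 * log R = log (R ^ 2) := by rw [log_pow]; norm_num
  have hlow : log (R ^ 2) ≤ log (1 + R ^ 2) := log_le_log (by positivity) (by linarith)
  have hup : log (1 + R ^ 2) ≤ log (R ^ 2) + 1 := by
    calc log (1 + R ^ 2) ≤ log (2 * R ^ 2) := log_le_log (by positivity) (by linarith)
      _ = log 2 + log (R ^ 2) := log_mul two_ne_zero (by positivity)
      _ ≤ log (R ^ 2) + 1 := by linarith [log_two_lt_d9]
  have hfrac : 0 < 1 / (1 + R ^ 2) := by positivity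
  have hfrac' : 1 / (1 + R ^ 2) ≤ 1 := by rw [div_le_one (by positivity)]; linarith
  rw [abs_le]
  constructor <;> nlinarith [pi_pos]

/-- `lim_{R→∞} (log R)⁻¹ ∫_{B⁴₊(0,R)} W² dx = 4π²`: the `L²` mass of the bubble diverges
logarithmically with rate `4π²`. -/
theorem statement18 :
    Tendsto (fun R : ℝ => (Real.log R)⁻¹ * ∫ x in hBall R, (Wb x) ^ 2)
      atTop (nhds (4 * Real.pi ^ 2)) := by
  refine tendsto_inv_log_mul_of_abs_sub_le
    (C := (∫ y : ℝ⁴, 16 * (1 + ‖y‖ ^ 2) ^ (-(5 : ℝ) / 2)) + 2 * π ^ 2) ?_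
  filter_upwards [eventually_ge_atTop 1] with R hR
  have herr := abs_setIntegral_halfBall_sub_le R
  rw [setIntegral_halfBall_radial (by linarith), abs_sub_comm] at herr
  rw [setIntegral_hBall_Wb_sq (by linarith)]
  exact (abs_sub_le _ _ _).trans (add_le_add herr (abs_two_mul_pi_sq_log_one_add_sq_sub_le hR))
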